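/- For every integer t ≥ 0: Tr( (Φ*)^t(I−J) ) ≤ N · ρ( (I−J) B_q (I−J) )^t, where (Φ*)^t denotes the t-fold iterate of Φ*, B_q = P_qᵀP_q + q²(Γ − PᵀP), Γ is the diagonal matrix with Γ_{ii} = Σ_j p_{ji}, and ρ(·) denotes the spectral radius. -/

import Mathlib

open Matrix BigOperators

/-- The map `Φ*(Y) = P_qᵀ Y P_q + q²(Ψ⁻(Pᵀ·Ψ(Y)) − Pᵀ Ψ⁻(Ψ(Y)) P)`,
where `P_q = (1−q)I + qP`. -/
noncomputable def PhiStar {N : ℕ} (P : Matrix (Fin N) (Fin N) ℝ) (q : ℝ)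
    (Y : Matrix (Fin N) (Fin N) ℝ) : Matrix (Fin N) (Fin N) ℝ :=
  ((1 - q) • (1 : Matrix (Fin N) (Fin N) ℝ) + q • P)ᵀ * Y *
      ((1 - q) • (1 : Matrix (Fin N) (Fin N) ℝ) + q • P)
    + q ^ 2 •
        (Matrix.diagonal (Pᵀ *ᵥ Matrix.diag Y)
          - Pᵀ * Matrix.diagonal (Matrix.diag Y) * P)

/-- The spectral radius of a real square matrix: the largest modulus of a
(complex) eigenvalue. -/
noncomputable def specRad {N : ℕ} (M : Matrix (Fin N) (Fin N) ℝ) : ℝ :=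
  (spectralRadius ℂ (M.map (algebraMap ℝ ℂ))).toReal

/-!
`Φ*` is linear and maps positive semidefinite matrices to positive semidefinite ones: its
`q²`-part `diag(Pᵀv) − Pᵀ diag(v) P` is positive semidefinite for `v ≥ 0` by Jensen's inequality
on each row of `P`. With `Π = I − J`, `A = P_q` and `ρ = ρ(Π B_q Π)`, the relations `AJ = J` and
`(Γ − PᵀP)J = 0` give `Π B_q Π − Φ*(Π) = (JA − J)ᵀ(JA − J) + (q²/N)(Γ − PᵀP) ⪰ 0`, while
`Π B_q Π ⪯ ρ Π` because `Π` is an orthogonal projection. Hence `Φ*(Π) ⪯ ρ Π`; positivity of `Φ*`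
iterates this to `(Φ*)ᵗ(Π) ⪯ ρᵗ Π`, and taking traces gives the bound, as `tr Π ≤ N`.
-/

theorem Finset.sq_sum_mul_le_sum_mul_sq {ι : Type*} (s : Finset ι) {w x : ι → ℝ}
    (hw : ∀ i ∈ s, 0 ≤ w i) (hw1 : ∑ i ∈ s, w i = 1) :
    (∑ i ∈ s, w i * x i) ^ 2 ≤ ∑ i ∈ s, w i * x i ^ 2 := by
  simpa [hw1] using Finset.sum_sq_le_sum_mul_sum_of_sq_le_mul s hw
    (fun i hi => mul_nonneg (hw i hi) (sq_nonneg (x i))) (fun i _ => le_of_eq (by ring))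

namespace Matrix

theorem transpose_mulVec_const {n : Type*} [Fintype n] (P : Matrix n n ℝ) (c : ℝ) :
    Pᵀ *ᵥ (fun _ => c) = c • fun i => ∑ j, P j i := by
  ext i
  simp [mulVec, dotProduct, Finset.mul_sum, mul_comm]

theorem posSemidef_diagonal_transpose_mulVec_sub {m n : Type*} [Fintype m] [Fintype n]
    [DecidableEq m] [DecidableEq n] {P : Matrix m n ℝ} (hP : ∀ i j, 0 ≤ P i j)
    (hProw : ∀ i, ∑ j, P i j = 1) {v : m → ℝ} (hv : 0 ≤ v) :
    (diagonal (Pᵀ *ᵥ v) - Pᵀ * diagonal v * P).PosSemidef := by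
  refine posSemidef_iff_dotProduct_mulVec.mpr ⟨?_, fun x => ?_⟩
  · simp [IsHermitian, conjTranspose_eq_transpose_of_trivial, Matrix.mul_assoc]
  have hdiag : x ⬝ᵥ diagonal (Pᵀ *ᵥ v) *ᵥ x = ∑ i, v i * ∑ j, P i j * x j ^ 2 := by
    simp only [dotProduct, mulVec_diagonal]
    simp only [mulVec, dotProduct, transpose_apply, Finset.sum_mul, Finset.mul_sum]
    rw [Finset.sum_comm]
    exact Finset.sum_congr rfl fun _ _ => Finset.sum_congr rfl fun _ _ => by ring
  have hgram : x ⬝ᵥ (Pᵀ * diagonal v * P) *ᵥ x = ∑ i, v i * (∑ j, P i j * x j) ^ 2 := by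
    rw [← mulVec_mulVec, ← mulVec_mulVec, dotProduct_mulVec, vecMul_transpose]
    simp only [dotProduct, mulVec_diagonal]
    exact Finset.sum_congr rfl fun _ _ => by simp only [mulVec, dotProduct]; ring
  rw [star_trivial, sub_mulVec, dotProduct_sub, hdiag, hgram, ← Finset.sum_sub_distrib]
  simp only [← mul_sub]
  exact Finset.sum_nonneg fun i _ => mul_nonneg (hv i)
    (sub_nonneg.mpr (Finset.sq_sum_mul_le_sum_mul_sq _ (fun j _ => hP i j) (hProw i)))

theorem PosSemidef.pow_smul_sub_iterate {n : Type*} {f : Module.End ℝ (Matrix n n ℝ)}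
    (hf : ∀ X, X.PosSemidef → (f X).PosSemidef) {ρ : ℝ} (hρ : 0 ≤ ρ) {X : Matrix n n ℝ}
    (hX : (ρ • X - f X).PosSemidef) (t : ℕ) : (ρ ^ t • X - f^[t] X).PosSemidef := by
  induction t with
  | zero => simpa using PosSemidef.zero
  | succ t ih =>
    have hsplit : ρ ^ (t + 1) • X - f^[t + 1] X
        = ρ • (ρ ^ t • X - f^[t] X) + (f ^ t) (ρ • X - f X) := by
      rw [map_sub, map_smul, Module.End.coe_pow, Function.iterate_succ_apply, pow_succ', mul_smul]
      module
    rw [hsplit, Module.End.coe_pow]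
    exact (ih.smul hρ).add (Function.Iterate.rec (fun Y => PosSemidef Y) hX hf t)

theorem trace_iterate_le_of_posSemidef_smul_sub {n : Type*} [Fintype n]
    {f : Module.End ℝ (Matrix n n ℝ)} (hf : ∀ X, X.PosSemidef → (f X).PosSemidef) {ρ : ℝ}
    (hρ : 0 ≤ ρ) {X : Matrix n n ℝ} (hX : (ρ • X - f X).PosSemidef) (t : ℕ) :
    (f^[t] X).trace ≤ ρ ^ t * X.trace := by
  have := (hX.pow_smul_sub_iterate hf hρ t).trace_nonneg
  rwa [trace_sub, trace_smul, smul_eq_mul, sub_nonneg] at this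

theorem spectralRadius_ne_top {n : Type*} [Fintype n] [DecidableEq n] (A : Matrix n n ℂ) :
    spectralRadius ℂ A ≠ ⊤ := by
  obtain ⟨C, hC⟩ := (A.finite_spectrum.image fun k => ‖k‖₊).bddAbove
  exact ne_top_of_le_ne_top ENNReal.coe_ne_top
    (iSup₂_le fun k hk => ENNReal.coe_le_coe.mpr (hC ⟨k, hk, rfl⟩))

theorem ofReal_mem_spectrum_map {n : Type*} [Fintype n] [DecidableEq n]
    {M : Matrix n n ℝ} {x : ℝ} (hx : x ∈ spectrum ℝ M) :
    (x : ℂ) ∈ spectrum ℂ (M.map (algebraMap ℝ ℂ)) := by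
  rw [mem_spectrum_iff_isRoot_charpoly] at hx ⊢
  rw [charpoly_map]
  exact hx.map

end Matrix

section SpectralRadius

variable {N : ℕ}

theorem le_specRad_of_mem_spectrum {M : Matrix (Fin N) (Fin N) ℝ} {x : ℝ}
    (hx : x ∈ spectrum ℝ M) : x ≤ specRad M := by
  have h := le_iSup₂ (f := fun (k : ℂ) (_ : k ∈ spectrum ℂ (M.map (algebraMap ℝ ℂ))) =>
    (‖k‖₊ : ENNReal)) _ (ofReal_mem_spectrum_map hx)
  have := ENNReal.toReal_mono (spectralRadius_ne_top _) h
  calc x ≤ |x| := le_abs_self x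
    _ ≤ specRad M := by simpa [specRad] using this

open scoped MatrixOrder in
theorem posSemidef_specRad_smul_one_sub {M : Matrix (Fin N) (Fin N) ℝ} (hM : M.IsHermitian) :
    (specRad M • 1 - M).PosSemidef := by
  rw [← Algebra.algebraMap_eq_smul_one, ← le_iff]
  exact le_algebraMap_of_spectrum_le (fun _ hx => le_specRad_of_mem_spectrum hx) hM

theorem posSemidef_specRad_smul_sub_conj {C B : Matrix (Fin N) (Fin N) ℝ} (hCT : Cᵀ = C)
    (hCC : IsIdempotentElem C) (hBT : Bᵀ = B) :
    (specRad (C * B * C) • C - C * B * C).PosSemidef := by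
  have hM : (C * B * C).IsHermitian := by
    rw [IsHermitian, conjTranspose_eq_transpose_of_trivial, transpose_mul, transpose_mul, hCT,
      hBT, Matrix.mul_assoc]
  have hCMC : C * (C * B * C) * C = C * B * C := by
    rw [← Matrix.mul_assoc, ← Matrix.mul_assoc, hCC.eq, Matrix.mul_assoc, hCC.eq]
  have := (posSemidef_specRad_smul_one_sub hM).conjTranspose_mul_mul_same C
  rwa [conjTranspose_eq_transpose_of_trivial, hCT, Matrix.mul_sub, Matrix.sub_mul,
    mul_smul_comm, Matrix.mul_one, smul_mul_assoc, hCC.eq, hCMC] at this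

end SpectralRadius

section LazyWalk

variable {n : Type*} [Fintype n] [DecidableEq n]

noncomputable def lazyWalk (P : Matrix n n ℝ) (q : ℝ) : Matrix n n ℝ := (1 - q) • 1 + q • P

noncomputable def gammaSubGram (P : Matrix n n ℝ) : Matrix n n ℝ :=
  diagonal (fun i => ∑ j, P j i) - Pᵀ * P

noncomputable def Bq (P : Matrix n n ℝ) (q : ℝ) : Matrix n n ℝ :=
  (lazyWalk P q)ᵀ * lazyWalk P q + q ^ 2 • gammaSubGram P

theorem lazyWalk_mul_of_mul_eq {P X : Matrix n n ℝ} (h : P * X = X) (q : ℝ) :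
    lazyWalk P q * X = X := by
  rw [lazyWalk, add_mul, smul_mul_assoc, smul_mul_assoc, one_mul, h, ← add_smul, sub_add_cancel,
    one_smul]

theorem gammaSubGram_transpose (P : Matrix n n ℝ) : (gammaSubGram P)ᵀ = gammaSubGram P := by
  rw [gammaSubGram, transpose_sub, diagonal_transpose, transpose_mul, transpose_transpose]

theorem posSemidef_gammaSubGram {P : Matrix n n ℝ} (hP : ∀ i j, 0 ≤ P i j)
    (hProw : ∀ i, ∑ j, P i j = 1) : (gammaSubGram P).PosSemidef := by
  have := posSemidef_diagonal_transpose_mulVec_sub hP hProw (v := fun _ => 1)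
    fun _ => zero_le_one
  rwa [transpose_mulVec_const, one_smul, diagonal_one, Matrix.mul_one] at this

theorem Bq_transpose (P : Matrix n n ℝ) (q : ℝ) : (Bq P q)ᵀ = Bq P q := by
  rw [Bq, transpose_add, transpose_mul, transpose_transpose, transpose_smul,
    gammaSubGram_transpose]

end LazyWalk

section Averaging

variable {N : ℕ} {P : Matrix (Fin N) (Fin N) ℝ}

noncomputable def avgMatrix (N : ℕ) : Matrix (Fin N) (Fin N) ℝ := of fun _ _ => (N : ℝ)⁻¹

theorem avgMatrix_transpose : (avgMatrix N)ᵀ = avgMatrix N := rfl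

theorem isIdempotentElem_avgMatrix : IsIdempotentElem (avgMatrix N) := by
  ext i j
  simp only [avgMatrix, mul_apply, of_apply, Finset.sum_const, Finset.card_univ,
    Fintype.card_fin, nsmul_eq_mul, ← mul_assoc]
  simpa using inv_mul_mul_self (N : ℝ)⁻¹

theorem mul_avgMatrix_of_row_sum (hProw : ∀ i, ∑ j, P i j = 1) :
    P * avgMatrix N = avgMatrix N := by
  ext i j
  simp only [avgMatrix, mul_apply, of_apply, ← Finset.sum_mul, hProw, one_mul]

theorem gammaSubGram_mul_avgMatrix (hProw : ∀ i, ∑ j, P i j = 1) :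
    gammaSubGram P * avgMatrix N = 0 := by
  have hdiag : diagonal (fun i => ∑ j, P j i) * avgMatrix N = Pᵀ * avgMatrix N := by
    ext i j
    rw [diagonal_mul, mul_apply]
    simp [avgMatrix, Finset.sum_mul]
  rw [gammaSubGram, sub_mul, hdiag, Matrix.mul_assoc, mul_avgMatrix_of_row_sum hProw, sub_self]

theorem trace_one_sub_avgMatrix_le : (1 - avgMatrix N).trace ≤ N := by
  rw [trace_sub, trace_one, Fintype.card_fin, sub_le_self_iff]
  exact Finset.sum_nonneg fun _ _ => inv_nonneg.mpr N.cast_nonneg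

end Averaging

section PhiStar

variable {N : ℕ} (P : Matrix (Fin N) (Fin N) ℝ) (q : ℝ)

noncomputable def phiStarLinearMap : Module.End ℝ (Matrix (Fin N) (Fin N) ℝ) where
  toFun := PhiStar P q
  map_add' X Y := by
    have hdiag : ∀ a b : Fin N → ℝ, diagonal (a + b) = diagonal a + diagonal b :=
      (diagonalAddMonoidHom (Fin N) ℝ).map_add
    simp only [PhiStar, diag_add, mulVec_add, hdiag, Matrix.mul_add, Matrix.add_mul]
    module
  map_smul' c X := by
    simp only [PhiStar, diag_smul, mulVec_smul, diagonal_smul, Matrix.mul_smul,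
      Matrix.smul_mul, RingHom.id_apply]
    module

theorem phiStar_eq_of_diag_eq_const {Y : Matrix (Fin N) (Fin N) ℝ} {c : ℝ}
    (hY : Y.diag = fun _ => c) :
    PhiStar P q Y = (lazyWalk P q)ᵀ * Y * lazyWalk P q + (q ^ 2 * c) • gammaSubGram P := by
  have hconst : diagonal (fun _ : Fin N => c) = c • 1 := by
    ext i j
    by_cases h : i = j <;> simp [h]
  rw [PhiStar, hY, transpose_mulVec_const, hconst, diagonal_smul, gammaSubGram, lazyWalk,
    Matrix.mul_smul, Matrix.smul_mul, Matrix.mul_one]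
  module

variable {P}

theorem posSemidef_phiStar (hP : ∀ i j, 0 ≤ P i j) (hProw : ∀ i, ∑ j, P i j = 1)
    {Y : Matrix (Fin N) (Fin N) ℝ} (hY : Y.PosSemidef) : (PhiStar P q Y).PosSemidef := by
  refine .add ?_ ((posSemidef_diagonal_transpose_mulVec_sub hP hProw
    fun _ => hY.diag_nonneg).smul (sq_nonneg q))
  simpa only [conjTranspose_eq_transpose_of_trivial] using hY.conjTranspose_mul_mul_same _

theorem centered_Bq_sub_phiStar (hProw : ∀ i, ∑ j, P i j = 1) :
    (1 - avgMatrix N) * Bq P q * (1 - avgMatrix N) - PhiStar P q (1 - avgMatrix N)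
      = (avgMatrix N * lazyWalk P q - avgMatrix N)ᵀ * (avgMatrix N * lazyWalk P q - avgMatrix N)
        + (q ^ 2 * (N : ℝ)⁻¹) • gammaSubGram P := by
  have hdiag : (1 - avgMatrix N).diag = fun _ => 1 - (N : ℝ)⁻¹ := by
    ext i; simp [avgMatrix]
  rw [phiStar_eq_of_diag_eq_const P q hdiag, Bq]
  set J := avgMatrix N
  set A := lazyWalk P q
  set G := gammaSubGram P
  have hJT : Jᵀ = J := avgMatrix_transpose
  have hJJ : J * J = J := isIdempotentElem_avgMatrix
  have hAJ : A * J = J := lazyWalk_mul_of_mul_eq (mul_avgMatrix_of_row_sum hProw) q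
  have hJA : J * Aᵀ = J := by
    simpa only [transpose_mul, hJT] using congrArg transpose hAJ
  have hGT : Gᵀ = G := gammaSubGram_transpose P
  have hGJ : G * J = 0 := gammaSubGram_mul_avgMatrix hProw
  have hJG : J * G = 0 := by
    simpa only [transpose_mul, hJT, hGT, transpose_zero] using congrArg transpose hGJ
  have hconj : (1 - J) * (Aᵀ * A + q ^ 2 • G) * (1 - J)
      = Aᵀ * A + q ^ 2 • G - Aᵀ * J - J * A + J := by
    calc (1 - J) * (Aᵀ * A + q ^ 2 • G) * (1 - J)
        = Aᵀ * A + q ^ 2 • G - Aᵀ * (A * J) - q ^ 2 • (G * J) - (J * Aᵀ) * A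
          - q ^ 2 • (J * G) + (J * Aᵀ) * (A * J) + q ^ 2 • (J * G * J) := by
          simp only [Matrix.mul_add, Matrix.add_mul, Matrix.mul_sub, Matrix.sub_mul,
            Matrix.mul_one, Matrix.one_mul, mul_smul_comm, smul_mul_assoc, Matrix.mul_assoc]
          module
      _ = _ := by rw [hAJ, hGJ, hJA, hJG, hJJ]; simp
  have hgram : (J * A - J)ᵀ * (J * A - J) = Aᵀ * J * A - Aᵀ * J - J * A + J := by
    rw [transpose_sub, transpose_mul, hJT]
    calc (Aᵀ * J - J) * (J * A - J) = Aᵀ * (J * J) * A - Aᵀ * (J * J) - J * J * A + J * J := by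
          noncomm_ring
      _ = _ := by rw [hJJ]
  rw [hconj, hgram]
  simp only [Matrix.mul_sub, Matrix.sub_mul, Matrix.mul_one]
  module

theorem posSemidef_specRad_smul_sub_phiStar (hP : ∀ i j, 0 ≤ P i j)
    (hProw : ∀ i, ∑ j, P i j = 1) :
    (specRad ((1 - avgMatrix N) * Bq P q * (1 - avgMatrix N)) • (1 - avgMatrix N)
      - PhiStar P q (1 - avgMatrix N)).PosSemidef := by
  have hspec := posSemidef_specRad_smul_sub_conj
    (by rw [transpose_sub, transpose_one, avgMatrix_transpose])
    isIdempotentElem_avgMatrix.one_sub (Bq_transpose P q)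
  have hgap : ((1 - avgMatrix N) * Bq P q * (1 - avgMatrix N)
      - PhiStar P q (1 - avgMatrix N)).PosSemidef := by
    rw [centered_Bq_sub_phiStar q hProw]
    refine .add ?_ ((posSemidef_gammaSubGram hP hProw).smul (by positivity))
    simpa only [conjTranspose_eq_transpose_of_trivial] using
      posSemidef_conjTranspose_mul_self (avgMatrix N * lazyWalk P q - avgMatrix N)
  simpa only [sub_add_sub_cancel] using hspec.add hgap

end PhiStar

theorem stmt11_general (N : ℕ) (P : Matrix (Fin N) (Fin N) ℝ)
    (hPnonneg : ∀ i j, 0 ≤ P i j) (hProw : ∀ i, ∑ j, P i j = 1)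
    (q : ℝ) (t : ℕ) :
    ((PhiStar P q)^[t]
        ((1 : Matrix (Fin N) (Fin N) ℝ) - Matrix.of fun _ _ => (N : ℝ)⁻¹)).trace
      ≤ (N : ℝ) *
          specRad
            (((1 : Matrix (Fin N) (Fin N) ℝ) - Matrix.of fun _ _ => (N : ℝ)⁻¹) *
              (((1 - q) • (1 : Matrix (Fin N) (Fin N) ℝ) + q • P)ᵀ *
                  ((1 - q) • (1 : Matrix (Fin N) (Fin N) ℝ) + q • P)
                + q ^ 2 • (Matrix.diagonal (fun i => ∑ j, P j i) - Pᵀ * P)) *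
              ((1 : Matrix (Fin N) (Fin N) ℝ) - Matrix.of fun _ _ => (N : ℝ)⁻¹)) ^ t := by
  have hρ : 0 ≤ specRad ((1 - avgMatrix N) * Bq P q * (1 - avgMatrix N)) :=
    ENNReal.toReal_nonneg
  calc _ ≤ _ := trace_iterate_le_of_posSemidef_smul_sub (f := phiStarLinearMap P q)
          (fun _ => posSemidef_phiStar q hPnonneg hProw) hρ
          (posSemidef_specRad_smul_sub_phiStar q hPnonneg hProw) t
    _ ≤ _ := by
      rw [mul_comm]
      exact mul_le_mul_of_nonneg_right trace_one_sub_avgMatrix_le (pow_nonneg hρ t)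

/-- `Tr((Φ*)ᵗ(I−J)) ≤ N · ρ((I−J) B_q (I−J))ᵗ`, where
`B_q = P_qᵀP_q + q²(Γ − PᵀP)` and `Γᵢᵢ = ∑ⱼ p_{ji}`. -/
theorem stmt11 (N : ℕ) (hN : 1 ≤ N) (P : Matrix (Fin N) (Fin N) ℝ)
    (hPnonneg : ∀ i j, 0 ≤ P i j) (hProw : ∀ i, ∑ j, P i j = 1)
    (q : ℝ) (hq0 : 0 ≤ q) (hq1 : q ≤ 1) (t : ℕ) :
    ((PhiStar P q)^[t]
        ((1 : Matrix (Fin N) (Fin N) ℝ) - Matrix.of fun _ _ => (N : ℝ)⁻¹)).trace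
      ≤ (N : ℝ) *
          specRad
            (((1 : Matrix (Fin N) (Fin N) ℝ) - Matrix.of fun _ _ => (N : ℝ)⁻¹) *
              (((1 - q) • (1 : Matrix (Fin N) (Fin N) ℝ) + q • P)ᵀ *
                  ((1 - q) • (1 : Matrix (Fin N) (Fin N) ℝ) + q • P)
                + q ^ 2 • (Matrix.diagonal (fun i => ∑ j, P j i) - Pᵀ * P)) *
              ((1 : Matrix (Fin N) (Fin N) ℝ) - Matrix.of fun _ _ => (N : ℝ)⁻¹)) ^ t :=
  stmt11_general N P hPnonneg hProw q t
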